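/- (Theorem 3.9, linear convergence in the smooth strongly convex case.) Suppose each s_i is in addition μ_i-strongly convex (μ_i > 0) and max_i α_i L_i ≤ 2. Consider the smooth NIDS iteration (the case r = 0): d^{k+1} = d^k + c(I − W)(x^k − Λ∇s(x^k) − Λ d^k) and x^{k+1} = x^k − Λ∇s(x^k) − Λ d^{k+1}. Let (d*, x*) satisfy (I − W)x* = 0, ∇s(x*) + d* = 0 and d* ∈ range(I − W), and assume d^k ∈ range(I − W). Define ρ = max( 1 − (2 − max_i α_i L_i) · min_i μ_i α_i , 1 − c / λ_max(Λ^{−1/2}(I − W)† Λ^{−1/2}) ), where λ_max denotes the largest eigenvalue. Then ‖x^{k+1} − x*‖²_{Λ⁻¹} + ‖d^{k+1} − d*‖²_{M+Λ} ≤ ρ · ( ‖x^k − x*‖²_{Λ⁻¹} + ‖d^k − d*‖²_{M+Λ} ). -/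

import Mathlib

open Matrix Filter Topology

noncomputable section

/-- Trace inner product `⟨x, y⟩ = tr(xᵀ y)` on `n × p` real matrices. -/
def iprod {n p : ℕ} (x y : Matrix (Fin n) (Fin p) ℝ) : ℝ := (xᵀ * y).trace

/-- Weighted inner product `⟨x, y⟩_Q = tr(xᵀ Q y)`. -/
def iprodQ {n p : ℕ} (Q : Matrix (Fin n) (Fin n) ℝ) (x y : Matrix (Fin n) (Fin p) ℝ) : ℝ :=
  (xᵀ * Q * y).trace

/-- Weighted squared (semi)norm `‖x‖_Q² = tr(xᵀ Q x)`. -/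
def nsq {n p : ℕ} (Q : Matrix (Fin n) (Fin n) ℝ) (x : Matrix (Fin n) (Fin p) ℝ) : ℝ :=
  iprodQ Q x x

/-- `∇s(x)`: the matrix whose `i`-th row is the gradient field `g i` applied to the `i`-th
row of `x`. -/
def gradS {n p : ℕ} (g : Fin n → EuclideanSpace ℝ (Fin p) → EuclideanSpace ℝ (Fin p))
    (x : Matrix (Fin n) (Fin p) ℝ) : Matrix (Fin n) (Fin p) ℝ :=
  Matrix.of fun i => WithLp.equiv 2 (Fin p → ℝ) (g i ((WithLp.equiv 2 (Fin p → ℝ)).symm (x i)))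

/-- `x ∈ range(A)`, i.e. `x = A y` for some `y ∈ ℝ^{n×p}`. -/
def InRange {n p : ℕ} (A : Matrix (Fin n) (Fin n) ℝ) (x : Matrix (Fin n) (Fin p) ℝ) : Prop :=
  ∃ y : Matrix (Fin n) (Fin p) ℝ, x = A * y

/-- `B` is the Moore–Penrose pseudoinverse of `A`. -/
def IsMoorePenrose {n : ℕ} (A B : Matrix (Fin n) (Fin n) ℝ) : Prop :=
  A * B * A = A ∧ B * A * B = B ∧ (A * B)ᵀ = A * B ∧ (B * A)ᵀ = B * A

/-- `r(x) = Σᵢ rᵢ(xᵢ)` where `xᵢ` is the `i`-th row of `x`. -/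
def rsum {n p : ℕ} (r : Fin n → (Fin p → ℝ) → ℝ) (x : Matrix (Fin n) (Fin p) ℝ) : ℝ :=
  ∑ i, r i (x i)

/-- `q ∈ ∂r(x)`: subgradient of `rsum r` at `x` w.r.t. the trace inner product. -/
def IsSubgrad {n p : ℕ} (r : Fin n → (Fin p → ℝ) → ℝ) (x q : Matrix (Fin n) (Fin p) ℝ) : Prop :=
  ∀ y : Matrix (Fin n) (Fin p) ℝ, rsum r x + iprod q (y - x) ≤ rsum r y

/-- `t` is an eigenvalue of the real matrix `A`. -/
def IsEig {n : ℕ} (A : Matrix (Fin n) (Fin n) ℝ) (t : ℝ) : Prop :=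
  ∃ v : Fin n → ℝ, v ≠ 0 ∧ A *ᵥ v = t • v

/-- The mixing matrix assumption: symmetry, null space of `I - W` is the span of the
all-ones vector, and `2I ≽ W + I ≻ 0`. -/
def IsMixing {n : ℕ} (W : Matrix (Fin n) (Fin n) ℝ) : Prop :=
  Wᵀ = W ∧ (∀ v : Fin n → ℝ, (1 - W) *ᵥ v = 0 ↔ ∃ t : ℝ, v = fun _ => t) ∧
    (W + 1).PosDef ∧ ((2 : ℝ) • (1 : Matrix (Fin n) (Fin n) ℝ) - (W + 1)).PosSemidef

/-- `x` is a minimizer over `ℝ^{n×p}` of `u ↦ r(u) + ½‖u − z‖²_{Λ⁻¹}` where `Λ = diag α`. -/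
def ProxMin {n p : ℕ} (r : Fin n → (Fin p → ℝ) → ℝ) (α : Fin n → ℝ)
    (z x : Matrix (Fin n) (Fin p) ℝ) : Prop :=
  ∀ u : Matrix (Fin n) (Fin p) ℝ,
    rsum r x + 1 / 2 * nsq (Matrix.diagonal fun i => (α i)⁻¹) (x - z) ≤
      rsum r u + 1 / 2 * nsq (Matrix.diagonal fun i => (α i)⁻¹) (u - z)

/-- `(d, z)` is a fixed point of the NIDS iteration. -/
def NIDSFixed {n p : ℕ} (W : Matrix (Fin n) (Fin n) ℝ) (α : Fin n → ℝ) (c : ℝ)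
    (g : Fin n → EuclideanSpace ℝ (Fin p) → EuclideanSpace ℝ (Fin p))
    (r : Fin n → (Fin p → ℝ) → ℝ) (d z : Matrix (Fin n) (Fin p) ℝ) : Prop :=
  ∃ x : Matrix (Fin n) (Fin p) ℝ, ProxMin r α z x ∧
    d = d + c • ((1 - W) *
      ((2 : ℝ) • x - z - Matrix.diagonal α * gradS g x - Matrix.diagonal α * d)) ∧
    z = x - Matrix.diagonal α * gradS g x - Matrix.diagonal α * d

end

/-!
Write `V = I - W`, `B = V†`, `Λ = diag α`, `e = dᵏ - d*` and `q = xᵏ - Λ∇s(xᵏ) - Λdᵏ - x*`. Then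
`dᵏ⁺¹ - d* = e + cVq` and `xᵏ⁺¹ - x* = q - cΛVq`, and because `e ∈ range V` and `VBV = V`,
expanding the squares gives the exact identity
`‖xᵏ⁺¹ - x*‖²_{Λ⁻¹} + c⁻¹‖dᵏ⁺¹ - d*‖²_B = ‖q + Λe‖²_{Λ⁻¹} + c⁻¹‖e‖²_B - ‖e‖²_Λ - c‖q‖²_{V - cVΛV}`,
where `q + Λe = xᵏ - x* - Λ(∇s(xᵏ) - ∇s(x*))` and `M + Λ = c⁻¹B`. Three estimates finish the proof:
`V - cVΛV ⪰ 0` because it is congruent to `S - cS²` with `S = Λ^{1/2}VΛ^{1/2}` and `I - cS ≻ 0`;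
co-coercivity and strong monotonicity of each `∇sᵢ` make the row-wise gradient step a contraction
with factor `1 - (2 - max αᵢLᵢ) min μᵢαᵢ`; and `‖e‖²_B ≤ λ_max ‖e‖²_Λ`.
-/

open RealInnerProductSpace

section GradientInequalities

variable {E : Type*} [NormedAddCommGroup E] [InnerProductSpace ℝ E] [CompleteSpace E]
  {f : E → ℝ} {g : E → E} {u v gu gv : E}

theorem HasGradientAt.hasDerivAt_add_smul {d gx : E} {t : ℝ}
    (hg : HasGradientAt f gx (u + t • d)) :
    HasDerivAt (fun t : ℝ => f (u + t • d)) ⟪gx, d⟫ t := by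
  have hline : HasDerivAt (fun t : ℝ => u + t • d) d t := by
    simpa using ((hasDerivAt_id t).smul_const d).const_add u
  exact (hasGradientAt_iff_hasFDerivAt.1 hg).comp_hasDerivAt t hline

theorem ConvexOn.add_inner_gradient_le (hf : ConvexOn ℝ Set.univ f) (hu : HasGradientAt f gu u)
    (v : E) : f u + ⟪gu, v - u⟫ ≤ f v := by
  have hline : ConvexOn ℝ Set.univ fun t : ℝ => f (u + t • (v - u)) := by
    have hcomp : (fun t : ℝ => f (u + t • (v - u))) = f ∘ AffineMap.lineMap u v := by
      ext t
      simp [AffineMap.lineMap_apply, add_comm]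
    simpa [hcomp] using hf.comp_affineMap (AffineMap.lineMap u v)
  have hslope := hline.le_slope_of_hasDerivAt (Set.mem_univ 0) (Set.mem_univ 1) one_pos
    (HasGradientAt.hasDerivAt_add_smul (by simpa using hu))
  simp [slope_def_field] at hslope
  linarith

theorem ConvexOn.inner_gradient_sub_nonneg (hf : ConvexOn ℝ Set.univ f)
    (hu : HasGradientAt f gu u) (hv : HasGradientAt f gv v) : 0 ≤ ⟪gu - gv, u - v⟫ := by
  have h₁ := hf.add_inner_gradient_le hu v
  have h₂ := hf.add_inner_gradient_le hv u
  rw [← neg_sub u v, inner_neg_right] at h₁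
  rw [inner_sub_left]
  linarith

theorem HasGradientAt.sub_half_mul_norm_sq (hu : HasGradientAt f gu u) (μ : ℝ) :
    HasGradientAt (fun x => f x - μ / 2 * ‖x‖ ^ 2) (gu - μ • u) u := by
  rw [hasGradientAt_iff_hasFDerivAt] at hu ⊢
  refine (hu.fun_sub ((hasStrictFDerivAt_norm_sq u).hasFDerivAt.const_mul (μ / 2))).congr_fderiv ?_
  ext y
  simp
  ring

theorem StrongConvexOn.mul_norm_sub_sq_le_inner_gradient_sub {μ : ℝ}
    (hf : StrongConvexOn Set.univ μ f) (hu : HasGradientAt f gu u) (hv : HasGradientAt f gv v) :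
    μ * ‖u - v‖ ^ 2 ≤ ⟪gu - gv, u - v⟫ := by
  have key := (strongConvexOn_iff_convex.1 hf).inner_gradient_sub_nonneg
    (hu.sub_half_mul_norm_sq μ) (hv.sub_half_mul_norm_sq μ)
  rw [show gu - μ • u - (gv - μ • v) = (gu - gv) - μ • (u - v) by module, inner_sub_left,
    real_inner_smul_left, real_inner_self_eq_norm_sq] at key
  linarith

theorem le_add_inner_gradient_add_sq_of_lipschitz (hg : ∀ x, HasGradientAt f (g x) x) {L : ℝ}
    (hlip : ∀ x y, ‖g x - g y‖ ≤ L * ‖x - y‖) (u v : E) :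
    f v ≤ f u + ⟪g u, v - u⟫ + L / 2 * ‖v - u‖ ^ 2 := by
  set d := v - u
  let φ : ℝ → ℝ := fun t => f (u + t • d) - t * ⟪g u, d⟫ - L / 2 * ‖d‖ ^ 2 * t ^ 2
  have hφ : ∀ t, HasDerivAt φ (⟪g (u + t • d) - g u, d⟫ - L * ‖d‖ ^ 2 * t) t := fun t => by
    refine ((((hg _).hasDerivAt_add_smul).sub ((hasDerivAt_id t).mul_const _)).sub
      ((hasDerivAt_pow 2 t).const_mul _)).congr_deriv ?_
    rw [inner_sub_left]
    simp
    ring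
  have hanti : AntitoneOn φ (Set.Icc 0 1) := by
    refine antitoneOn_of_deriv_nonpos (convex_Icc 0 1)
      (fun t _ => (hφ t).continuousAt.continuousWithinAt)
      (fun t _ => (hφ t).differentiableAt.differentiableWithinAt) fun t ht => ?_
    rw [interior_Icc] at ht
    rw [(hφ t).deriv, sub_nonpos]
    calc ⟪g (u + t • d) - g u, d⟫ ≤ ‖g (u + t • d) - g u‖ * ‖d‖ := real_inner_le_norm _ _
      _ ≤ L * ‖t • d‖ * ‖d‖ := by gcongr; simpa using hlip (u + t • d) u
      _ = L * ‖d‖ ^ 2 * t := by rw [norm_smul, Real.norm_of_nonneg ht.1.le]; ring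
  have h01 := hanti (Set.left_mem_Icc.2 zero_le_one) (Set.right_mem_Icc.2 zero_le_one) zero_le_one
  simp [φ, d] at h01
  linarith

theorem ConvexOn.add_inner_gradient_add_norm_sq_div_le (hf : ConvexOn ℝ Set.univ f)
    (hg : ∀ x, HasGradientAt f (g x) x) {L : ℝ} (hL : 0 < L)
    (hlip : ∀ x y, ‖g x - g y‖ ≤ L * ‖x - y‖) (u v : E) :
    f v + ⟪g v, u - v⟫ + ‖g u - g v‖ ^ 2 / (2 * L) ≤ f u := by
  set δ := g u - g v
  -- `u - L⁻¹ • δ` is a gradient step from `u` for `f - ⟪g v, ·⟫`, which is minimal at `v`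
  have h₁ := hf.add_inner_gradient_le (hg v) (u - L⁻¹ • δ)
  have h₂ := le_add_inner_gradient_add_sq_of_lipschitz hg hlip u (u - L⁻¹ • δ)
  rw [sub_right_comm, inner_sub_right, real_inner_smul_right] at h₁
  rw [sub_sub_cancel_left, inner_neg_right, real_inner_smul_right, norm_neg, norm_smul,
    Real.norm_of_nonneg (inv_nonneg.2 hL.le)] at h₂
  have hδ : ⟪g u, δ⟫ - ⟪g v, δ⟫ = ‖δ‖ ^ 2 := by
    rw [← inner_sub_left, real_inner_self_eq_norm_sq]
  have hLL : L * L⁻¹ = 1 := mul_inv_cancel₀ hL.ne'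
  linear_combination h₁ + h₂ - L⁻¹ * hδ + (L⁻¹ * ‖δ‖ ^ 2 / 2) * hLL

theorem ConvexOn.norm_gradient_sub_sq_le_mul_inner (hf : ConvexOn ℝ Set.univ f)
    (hg : ∀ x, HasGradientAt f (g x) x) {L : ℝ} (hL : 0 < L)
    (hlip : ∀ x y, ‖g x - g y‖ ≤ L * ‖x - y‖) (u v : E) :
    ‖g u - g v‖ ^ 2 ≤ L * ⟪g u - g v, u - v⟫ := by
  have h₁ := hf.add_inner_gradient_add_norm_sq_div_le hg hL hlip u v
  have h₂ := hf.add_inner_gradient_add_norm_sq_div_le hg hL hlip v u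
  rw [norm_sub_rev, ← neg_sub u v, inner_neg_right] at h₂
  have hsum : ‖g u - g v‖ ^ 2 / L ≤ ⟪g u - g v, u - v⟫ := by
    rw [inner_sub_left]
    have hhalf : ‖g u - g v‖ ^ 2 / L = 2 * (‖g u - g v‖ ^ 2 / (2 * L)) := by field_simp
    linarith
  rwa [div_le_iff₀' hL] at hsum

theorem ConvexOn.norm_sub_sub_smul_gradient_sub_sq_le (hf : ConvexOn ℝ Set.univ f) {μ : ℝ}
    (hμ : StrongConvexOn Set.univ μ f) (hg : ∀ x, HasGradientAt f (g x) x) {L : ℝ} (hL : 0 < L)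
    (hlip : ∀ x y, ‖g x - g y‖ ≤ L * ‖x - y‖) {a σ : ℝ} (ha : 0 ≤ a) (haL : a * L ≤ σ)
    (hσ : σ ≤ 2) (u v : E) :
    ‖u - v - a • (g u - g v)‖ ^ 2 ≤ (1 - (2 - σ) * (a * μ)) * ‖u - v‖ ^ 2 := by
  have hcoco := hf.norm_gradient_sub_sq_le_mul_inner hg hL hlip u v
  have hmono := hμ.mul_norm_sub_sq_le_inner_gradient_sub (hg u) (hg v)
  have hpos := hf.inner_gradient_sub_nonneg (hg u) (hg v)
  rw [real_inner_comm] at hcoco hmono hpos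
  calc ‖u - v - a • (g u - g v)‖ ^ 2
      = ‖u - v‖ ^ 2 - 2 * a * ⟪u - v, g u - g v⟫ + a ^ 2 * ‖g u - g v‖ ^ 2 := by
        rw [norm_sub_sq_real, real_inner_smul_right, norm_smul, Real.norm_of_nonneg ha]
        ring
    _ ≤ ‖u - v‖ ^ 2 - a * (2 - σ) * ⟪u - v, g u - g v⟫ := by
        nlinarith [mul_le_mul_of_nonneg_left hcoco (sq_nonneg a),
          mul_le_mul_of_nonneg_left haL (mul_nonneg ha hpos)]
    _ ≤ (1 - (2 - σ) * (a * μ)) * ‖u - v‖ ^ 2 := by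
        nlinarith [mul_le_mul_of_nonneg_left hmono (mul_nonneg ha (sub_nonneg.2 hσ))]

end GradientInequalities

section TraceInner

variable {n p : ℕ}

theorem iprod_comm (x y : Matrix (Fin n) (Fin p) ℝ) : iprod x y = iprod y x := by
  rw [iprod, ← trace_transpose, transpose_mul, transpose_transpose, iprod]

theorem iprod_add_left (x y z : Matrix (Fin n) (Fin p) ℝ) :
    iprod (x + y) z = iprod x z + iprod y z := by
  simp [iprod, Matrix.add_mul]

theorem iprod_add_right (x y z : Matrix (Fin n) (Fin p) ℝ) :
    iprod x (y + z) = iprod x y + iprod x z := by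
  simp [iprod, Matrix.mul_add]

theorem iprod_smul_right (c : ℝ) (x y : Matrix (Fin n) (Fin p) ℝ) :
    iprod x (c • y) = c * iprod x y := by
  simp [iprod]

theorem iprod_mul_left (A : Matrix (Fin n) (Fin n) ℝ) (x y : Matrix (Fin n) (Fin p) ℝ) :
    iprod (A * x) y = iprod x (Aᵀ * y) := by
  rw [iprod, transpose_mul, Matrix.mul_assoc, iprod]

theorem nsq_eq_iprod (Q : Matrix (Fin n) (Fin n) ℝ) (x : Matrix (Fin n) (Fin p) ℝ) :
    nsq Q x = iprod x (Q * x) := by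
  rw [nsq, iprodQ, iprod, Matrix.mul_assoc]

theorem nsq_add {Q : Matrix (Fin n) (Fin n) ℝ} (hQ : Q.IsSymm) (x y : Matrix (Fin n) (Fin p) ℝ) :
    nsq Q (x + y) = nsq Q x + 2 * iprod x (Q * y) + nsq Q y := by
  have hyx : iprod y (Q * x) = iprod x (Q * y) := by rw [iprod_comm, iprod_mul_left, hQ.eq]
  simp only [nsq_eq_iprod, Matrix.mul_add, iprod_add_left, iprod_add_right, hyx]
  ring

theorem nsq_smul (Q : Matrix (Fin n) (Fin n) ℝ) (c : ℝ) (x : Matrix (Fin n) (Fin p) ℝ) :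
    nsq Q (c • x) = c ^ 2 * nsq Q x := by
  simp [nsq, iprodQ, trace_smul, smul_smul, sq]

theorem nsq_mul (Q A : Matrix (Fin n) (Fin n) ℝ) (x : Matrix (Fin n) (Fin p) ℝ) :
    nsq Q (A * x) = nsq (Aᵀ * Q * A) x := by
  simp only [nsq, iprodQ, transpose_mul, Matrix.mul_assoc]

theorem nsq_sub_weight (Q R : Matrix (Fin n) (Fin n) ℝ) (x : Matrix (Fin n) (Fin p) ℝ) :
    nsq (Q - R) x = nsq Q x - nsq R x := by
  simp [nsq, iprodQ, Matrix.mul_sub, Matrix.sub_mul]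

theorem nsq_smul_weight (c : ℝ) (Q : Matrix (Fin n) (Fin n) ℝ) (x : Matrix (Fin n) (Fin p) ℝ) :
    nsq (c • Q) x = c * nsq Q x := by
  simp [nsq, iprodQ, trace_smul]

theorem nsq_nonneg {Q : Matrix (Fin n) (Fin n) ℝ} (hQ : Q.PosSemidef)
    (x : Matrix (Fin n) (Fin p) ℝ) : 0 ≤ nsq Q x := by
  simpa [nsq, iprodQ, conjTranspose_eq_transpose_of_trivial] using
    (hQ.conjTranspose_mul_mul_same x).trace_nonneg

theorem nsq_diagonal (β : Fin n → ℝ) (x : Matrix (Fin n) (Fin p) ℝ) :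
    nsq (diagonal β) x = ∑ i, β i * ‖WithLp.toLp 2 (x i)‖ ^ 2 := by
  have hrow : ∀ i, ‖WithLp.toLp 2 (x i)‖ ^ 2 = ∑ j, x i j ^ 2 := fun i => by
    simp [EuclideanSpace.norm_sq_eq]
  rw [nsq_eq_iprod, iprod]
  simp only [hrow, trace, diag, mul_apply, transpose_apply, diagonal_apply, Finset.mul_sum]
  rw [Finset.sum_comm]
  simp [sq, mul_left_comm]

theorem nsq_add_mul_of_mul_eq_one {P Λ : Matrix (Fin n) (Fin n) ℝ} (hP : P.IsSymm) (hΛ : Λ.IsSymm)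
    (hPΛ : P * Λ = 1) (x y : Matrix (Fin n) (Fin p) ℝ) :
    nsq P (x + Λ * y) = nsq P x + 2 * iprod x y + nsq Λ y := by
  rw [nsq_add hP, ← Matrix.mul_assoc, hPΛ, Matrix.one_mul, nsq_mul, hΛ.eq, Matrix.mul_assoc, hPΛ,
    Matrix.mul_one]

theorem nsq_mul_of_mul_mul_eq {V B : Matrix (Fin n) (Fin n) ℝ} (hV : V.IsSymm)
    (hVBV : V * B * V = V) (x : Matrix (Fin n) (Fin p) ℝ) : nsq B (V * x) = nsq V x := by
  rw [nsq_mul, hV.eq, hVBV]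

end TraceInner

namespace IsMoorePenrose

variable {n : ℕ} {A B C : Matrix (Fin n) (Fin n) ℝ}

theorem unique (hB : IsMoorePenrose A B) (hC : IsMoorePenrose A C) : B = C := by
  obtain ⟨hB₁, hB₂, hB₃, hB₄⟩ := hB
  obtain ⟨hC₁, hC₂, hC₃, hC₄⟩ := hC
  have hAB : A * B = A * C :=
    calc A * B = (A * C)ᵀ * (A * B)ᵀ := by
          rw [hC₃, hB₃, ← Matrix.mul_assoc, hC₁]
      _ = (A * B * A * C)ᵀ := by rw [← transpose_mul, ← Matrix.mul_assoc]
      _ = A * C := by rw [hB₁, hC₃]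
  have hBA : B * A = C * A :=
    calc B * A = (B * A)ᵀ * (C * A)ᵀ := by
          rw [hB₄, hC₄, ← Matrix.mul_assoc, Matrix.mul_assoc B A C, Matrix.mul_assoc B (A * C) A,
            hC₁]
      _ = (C * A * B * A)ᵀ := by rw [← transpose_mul, ← Matrix.mul_assoc]
      _ = C * A := by rw [Matrix.mul_assoc C A B, Matrix.mul_assoc C (A * B) A, hB₁, hC₄]
  calc B = B * A * B := hB₂.symm
    _ = C * A * C := by rw [Matrix.mul_assoc, hAB, ← Matrix.mul_assoc, hBA]
    _ = C := hC₂

theorem transpose (hA : A.IsSymm) (h : IsMoorePenrose A B) : IsMoorePenrose A Bᵀ := by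
  obtain ⟨h₁, h₂, h₃, h₄⟩ := h
  have hAB : A * Bᵀ = B * A := by rw [← h₄, transpose_mul, hA.eq]
  have hBA : Bᵀ * A = A * B := by rw [← h₃, transpose_mul, hA.eq]
  refine ⟨?_, ?_, by rw [hAB, h₄], by rw [hBA, h₃]⟩
  · simpa [transpose_mul, hA.eq, Matrix.mul_assoc] using congrArg Matrix.transpose h₁
  · simpa [transpose_mul, hA.eq, Matrix.mul_assoc] using congrArg Matrix.transpose h₂

theorem isSymm (hA : A.IsSymm) (h : IsMoorePenrose A B) : B.IsSymm :=
  (h.transpose hA).unique h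

theorem posSemidef (hA : A.PosSemidef) (h : IsMoorePenrose A B) : B.PosSemidef := by
  have hB := (h.isSymm (isHermitian_iff_isSymm.1 hA.1)).eq
  simpa [conjTranspose_eq_transpose_of_trivial, hB, h.2.1] using hA.conjTranspose_mul_mul_same B

end IsMoorePenrose

theorem IsMixing.posSemidef_one_sub {n : ℕ} {W : Matrix (Fin n) (Fin n) ℝ} (hW : IsMixing W) :
    (1 - W).PosSemidef := by
  simpa [two_smul, add_sub_add_right_eq_sub] using hW.2.2.2

theorem add_le_max_mul_add {a b r s x y : ℝ} (ha : a ≤ r * x) (hb : b ≤ s * y) (hx : 0 ≤ x)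
    (hy : 0 ≤ y) : a + b ≤ max r s * (x + y) := by
  nlinarith [mul_le_mul_of_nonneg_right (le_max_left r s) hx,
    mul_le_mul_of_nonneg_right (le_max_right r s) hy]

section Spectral

open scoped MatrixOrder ComplexOrder

theorem Matrix.PosSemidef.sub_smul_mul_self {𝕜 ι : Type*} [RCLike 𝕜] [Fintype ι] [DecidableEq ι]
    {S : Matrix ι ι 𝕜} (hS : S.PosSemidef) {c : ℝ} (h : (1 - c • S).PosSemidef) :
    (S - c • (S * S)).PosSemidef := by
  obtain ⟨R, rfl, hR⟩ : ∃ R : Matrix ι ι 𝕜, R * R = S ∧ Rᴴ = R :=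
    ⟨CFC.sqrt S, CFC.sqrt_mul_sqrt_self S hS.nonneg, (CFC.sqrt_nonneg S).posSemidef.isHermitian.eq⟩
  have hcong := h.mul_mul_conjTranspose_same R
  rw [hR, Matrix.mul_sub, Matrix.sub_mul, Matrix.mul_one, Matrix.mul_smul, Matrix.smul_mul] at hcong
  simpa only [Matrix.mul_assoc] using hcong

theorem Matrix.PosSemidef.sub_smul_mul_mul_mul_self {𝕜 ι : Type*} [RCLike 𝕜] [Fintype ι]
    [DecidableEq ι] {V D E : Matrix ι ι 𝕜} (hV : V.PosSemidef) (hD : D.IsHermitian)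
    (hE : E.IsHermitian) (hDE : D * E = 1) {c : ℝ} (h : (1 - c • (D * V * D)).PosSemidef) :
    (V - c • (V * (D * D) * V)).PosSemidef := by
  have hED : ∀ X, E * (D * X) = X := fun X => by
    rw [← Matrix.mul_assoc, mul_eq_one_comm.1 hDE, Matrix.one_mul]
  have hS : (D * V * D).PosSemidef := by simpa [hD.eq] using hV.mul_mul_conjTranspose_same D
  have hcong := (hS.sub_smul_mul_self h).mul_mul_conjTranspose_same E
  rw [hE.eq, Matrix.mul_sub, Matrix.sub_mul, Matrix.mul_smul, Matrix.smul_mul] at hcong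
  simpa only [Matrix.mul_assoc, hDE, Matrix.mul_one, hED] using hcong

theorem Matrix.IsHermitian.isEig_eigenvalues {n : ℕ} {A : Matrix (Fin n) (Fin n) ℝ}
    (hA : A.IsHermitian) (i : Fin n) : IsEig A (hA.eigenvalues i) :=
  ⟨hA.eigenvectorBasis i, by simpa using hA.eigenvectorBasis.orthonormal.ne_zero i,
    hA.mulVec_eigenvectorBasis i⟩

theorem Matrix.IsHermitian.posSemidef_smul_one_sub {n : ℕ} {A : Matrix (Fin n) (Fin n) ℝ}
    (hA : A.IsHermitian) {m : ℝ} (hm : ∀ t, IsEig A t → t ≤ m) : (m • 1 - A).PosSemidef := by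
  have hle : A ≤ algebraMap ℝ _ m := le_algebraMap_of_spectrum_le (fun t ht => by
    obtain ⟨i, rfl⟩ := hA.spectrum_real_eq_range_eigenvalues ▸ ht
    exact hm _ (hA.isEig_eigenvalues i)) hA
  rwa [Matrix.le_iff, Algebra.algebraMap_eq_smul_one] at hle

theorem Matrix.IsHermitian.posSemidef_smul_mul_self_sub {n : ℕ} {B D E : Matrix (Fin n) (Fin n) ℝ}
    (hB : B.IsHermitian) (hD : D.IsHermitian) (hE : E.IsHermitian) (hDE : D * E = 1) {m : ℝ}
    (hm : ∀ t, IsEig (E * B * E) t → t ≤ m) : (m • (D * D) - B).PosSemidef := by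
  have hDE' : ∀ X, D * (E * X) = X := fun X => by rw [← Matrix.mul_assoc, hDE, Matrix.one_mul]
  have hA : (E * B * E).IsHermitian := by
    simpa only [hE.eq] using isHermitian_mul_mul_conjTranspose E hB
  have hcong := (hA.posSemidef_smul_one_sub hm).mul_mul_conjTranspose_same D
  rw [hD.eq, Matrix.mul_sub, Matrix.sub_mul, Matrix.mul_smul, Matrix.smul_mul,
    Matrix.mul_one] at hcong
  simpa only [Matrix.mul_assoc, mul_eq_one_comm.1 hDE, Matrix.mul_one, hDE'] using hcong

end Spectral

section NIDS

variable {n p : ℕ}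

theorem nids_energy_identity {V B P Λ : Matrix (Fin n) (Fin n) ℝ} (hV : V.IsSymm)
    (hVBV : V * B * V = V) (hP : P.IsSymm) (hΛ : Λ.IsSymm) (hPΛ : P * Λ = 1) {c : ℝ} (hc : c ≠ 0)
    (q y : Matrix (Fin n) (Fin p) ℝ) :
    nsq P (q - Λ * (c • (V * q))) + c⁻¹ * nsq B (V * y + c • (V * q)) =
      nsq P (q + Λ * (V * y)) + c⁻¹ * nsq B (V * y) - nsq Λ (V * y) -
        c * nsq (V - c • (V * Λ * V)) q := by
  have hVq : iprod y (V * q) = iprod q (V * y) := by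
    rw [iprod_comm, iprod_mul_left, hV.eq]
  have hx : q - Λ * (c • (V * q)) = q + Λ * (V * ((-c) • q)) := by
    simp only [Matrix.mul_smul, neg_smul, Matrix.mul_neg, sub_eq_add_neg]
  have hVΛV : nsq (V * Λ * V) q = nsq Λ (V * q) := by rw [nsq_mul, hV.eq]
  have hd : V * y + c • (V * q) = V * (y + c • q) := by rw [Matrix.mul_add, Matrix.mul_smul]
  rw [hx, hd, nsq_add_mul_of_mul_eq_one hP hΛ hPΛ, nsq_add_mul_of_mul_eq_one hP hΛ hPΛ,
    nsq_mul_of_mul_mul_eq hV hVBV, nsq_mul_of_mul_mul_eq hV hVBV, nsq_add hV, nsq_smul,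
    Matrix.mul_smul, Matrix.mul_smul, iprod_smul_right, iprod_smul_right, nsq_smul, hVq,
    nsq_sub_weight, nsq_smul_weight, hVΛV, ← nsq_eq_iprod]
  field_simp
  ring

theorem nids_energy_le {V B : Matrix (Fin n) (Fin n) ℝ} (hV : V.IsSymm) (hVBV : V * B * V = V)
    {α : Fin n → ℝ} (hα : ∀ i, α i ≠ 0) {c : ℝ} (hc : 0 < c)
    (hVΛV : (V - c • (V * diagonal α * V)).PosSemidef)
    {g : Fin n → EuclideanSpace ℝ (Fin p) → EuclideanSpace ℝ (Fin p)}
    {dk dk1 xk xk1 dstar xstar : Matrix (Fin n) (Fin p) ℝ}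
    (hdu : dk1 = dk + c • (V * (xk - diagonal α * gradS g xk - diagonal α * dk)))
    (hxu : xk1 = xk - diagonal α * gradS g xk - diagonal α * dk1)
    (hxs : V * xstar = 0) (hds : gradS g xstar + dstar = 0)
    (hdstar : InRange V dstar) (hdk : InRange V dk) :
    nsq (diagonal fun i => (α i)⁻¹) (xk1 - xstar) + c⁻¹ * nsq B (dk1 - dstar) ≤
      nsq (diagonal fun i => (α i)⁻¹) (xk - xstar - diagonal α * (gradS g xk - gradS g xstar)) +
        c⁻¹ * nsq B (dk - dstar) - nsq (diagonal α) (dk - dstar) := by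
  obtain ⟨y, rfl⟩ := hdk
  obtain ⟨ystar, rfl⟩ := hdstar
  set Λ := diagonal α
  obtain ⟨q, hq⟩ : ∃ q, xk - Λ * gradS g xk - Λ * (V * y) = q + xstar :=
    ⟨_, (sub_add_cancel _ _).symm⟩
  have hgstar : gradS g xstar = -(V * ystar) := eq_neg_of_add_eq_zero_left hds
  have hVq : V * (xk - Λ * gradS g xk - Λ * (V * y)) = V * q := by
    rw [hq, Matrix.mul_add, hxs, add_zero]
  have hd : dk1 - V * ystar = V * (y - ystar) + c • (V * q) := by
    rw [hdu, hVq, Matrix.mul_sub]; abel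
  have hx : xk1 - xstar = q - Λ * (c • (V * q)) := by
    rw [hxu, hdu, hVq, Matrix.mul_add]
    linear_combination (norm := module) hq
  have hh : xk - xstar - Λ * (gradS g xk - gradS g xstar) = q + Λ * (V * (y - ystar)) := by
    rw [hgstar, Matrix.mul_sub, Matrix.mul_sub, Matrix.mul_neg, Matrix.mul_sub]
    linear_combination (norm := module) hq
  have hΛ : (diagonal fun i => (α i)⁻¹) * Λ = 1 := by simp [Λ, hα]
  rw [hd, hx, hh, ← Matrix.mul_sub, nids_energy_identity hV hVBV (isSymm_diagonal _)
    (isSymm_diagonal _) hΛ hc.ne']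
  linarith [mul_nonneg hc.le (nsq_nonneg hVΛV q)]

theorem nsq_diagonal_inv_gradient_step_le {α : Fin n → ℝ} (hα : ∀ i, 0 ≤ α i)
    {g : Fin n → EuclideanSpace ℝ (Fin p) → EuclideanSpace ℝ (Fin p)} {ρ : ℝ}
    (hg : ∀ i u v, ‖u - v - α i • (g i u - g i v)‖ ^ 2 ≤ ρ * ‖u - v‖ ^ 2)
    (x y : Matrix (Fin n) (Fin p) ℝ) :
    nsq (diagonal fun i => (α i)⁻¹) (x - y - diagonal α * (gradS g x - gradS g y)) ≤
      ρ * nsq (diagonal fun i => (α i)⁻¹) (x - y) := by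
  rw [nsq_diagonal, nsq_diagonal, Finset.mul_sum]
  refine Finset.sum_le_sum fun i _ => ?_
  have hrow : WithLp.toLp 2 ((x - y - diagonal α * (gradS g x - gradS g y)) i) =
      WithLp.toLp 2 (x i) - WithLp.toLp 2 (y i) -
        α i • (g i (WithLp.toLp 2 (x i)) - g i (WithLp.toLp 2 (y i))) := by
    ext j
    simp [gradS, diagonal_mul]
  rw [hrow, mul_left_comm]
  exact mul_le_mul_of_nonneg_left (hg i _ _) (inv_nonneg.2 (hα i))

theorem nids_gradient_step_le {α L μ : Fin n → ℝ} (hα : ∀ i, 0 ≤ α i) (hL : ∀ i, 0 < L i)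
    {s : Fin n → EuclideanSpace ℝ (Fin p) → ℝ}
    {g : Fin n → EuclideanSpace ℝ (Fin p) → EuclideanSpace ℝ (Fin p)}
    (hs : ∀ i, ConvexOn ℝ Set.univ (s i)) (hsc : ∀ i, StrongConvexOn Set.univ (μ i) (s i))
    (hg : ∀ i v, HasGradientAt (s i) (g i v) v)
    (hlip : ∀ i v w, ‖g i v - g i w‖ ≤ L i * ‖v - w‖) (hss : (⨆ i, α i * L i) ≤ 2)
    (x y : Matrix (Fin n) (Fin p) ℝ) :
    nsq (diagonal fun i => (α i)⁻¹) (x - y - diagonal α * (gradS g x - gradS g y)) ≤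
      (1 - (2 - ⨆ i, α i * L i) * ⨅ i, μ i * α i) * nsq (diagonal fun i => (α i)⁻¹) (x - y) := by
  refine nsq_diagonal_inv_gradient_step_le hα (fun i u v => ?_) x y
  refine ((hs i).norm_sub_sub_smul_gradient_sub_sq_le (hsc i) (hg i) (hL i) (hlip i) (hα i)
    (le_ciSup (Set.finite_range fun i => α i * L i).bddAbove i) hss u v).trans ?_
  gcongr
  exact (ciInf_le (Set.finite_range fun i => μ i * α i).bddBelow i).trans_eq (mul_comm _ _)

theorem nids_dual_le {B Λ : Matrix (Fin n) (Fin n) ℝ} (hB : B.PosSemidef) (hΛ : Λ.PosSemidef)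
    {l : ℝ} (hl : (l • Λ - B).PosSemidef) {c : ℝ} (hc : c ≠ 0) (e : Matrix (Fin n) (Fin p) ℝ) :
    c⁻¹ * nsq B e - nsq Λ e ≤ (1 - c / l) * (c⁻¹ * nsq B e) := by
  have hBl := nsq_nonneg hl e
  rw [nsq_sub_weight, nsq_smul_weight] at hBl
  have hdiv : nsq B e / l ≤ nsq Λ e := by
    rcases le_or_gt l 0 with hl₀ | hl₀
    · exact (div_nonpos_of_nonneg_of_nonpos (nsq_nonneg hB e) hl₀).trans (nsq_nonneg hΛ e)
    · rw [div_le_iff₀ hl₀]; linarith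
  rw [sub_mul, one_mul, div_mul_eq_mul_div, ← mul_assoc, mul_inv_cancel₀ hc, one_mul]
  linarith

end NIDS

theorem nids_linear_convergence_general
    {n p : ℕ}
    (W : Matrix (Fin n) (Fin n) ℝ) (hW : IsMixing W)
    (α L μ : Fin n → ℝ) (hα : ∀ i, 0 < α i) (hL : ∀ i, 0 < L i)
    (c : ℝ) (hc : 0 < c)
    (hcW : ((1 : Matrix (Fin n) (Fin n) ℝ) -
      c • ((Matrix.diagonal fun i => Real.sqrt (α i)) * (1 - W) *
        Matrix.diagonal fun i => Real.sqrt (α i))).PosDef)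
    (B : Matrix (Fin n) (Fin n) ℝ) (hB : IsMoorePenrose (1 - W) B)
    (s : Fin n → EuclideanSpace ℝ (Fin p) → ℝ)
    (g : Fin n → EuclideanSpace ℝ (Fin p) → EuclideanSpace ℝ (Fin p))
    (hs : ∀ i, ConvexOn ℝ Set.univ (s i))
    (hg : ∀ i v, HasGradientAt (s i) (g i v) v)
    (hlip : ∀ i (v w : EuclideanSpace ℝ (Fin p)), ‖g i v - g i w‖ ≤ L i * ‖v - w‖)
    (hsc : ∀ i, ConvexOn ℝ Set.univ
      fun v : EuclideanSpace ℝ (Fin p) => s i v - μ i / 2 * ‖v‖ ^ 2)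
    (hss : (⨆ i, α i * L i) ≤ 2)
    (dk dk1 xk xk1 dstar xstar : Matrix (Fin n) (Fin p) ℝ)
    (hdu : dk1 = dk + c • ((1 - W) *
      (xk - Matrix.diagonal α * gradS g xk - Matrix.diagonal α * dk)))
    (hxu : xk1 = xk - Matrix.diagonal α * gradS g xk - Matrix.diagonal α * dk1)
    (hxs : (1 - W) * xstar = 0)
    (hds : gradS g xstar + dstar = 0)
    (hdstar : InRange (1 - W) dstar) (hdk : InRange (1 - W) dk)
    (lmax : ℝ)
    (hl2 : ∀ t, IsEig ((Matrix.diagonal fun i => (Real.sqrt (α i))⁻¹) * B *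
      Matrix.diagonal fun i => (Real.sqrt (α i))⁻¹) t → t ≤ lmax) :
    nsq (Matrix.diagonal fun i => (α i)⁻¹) (xk1 - xstar) +
        nsq (c⁻¹ • B - Matrix.diagonal α + Matrix.diagonal α) (dk1 - dstar) ≤
      max (1 - (2 - ⨆ i, α i * L i) * ⨅ i, μ i * α i) (1 - c / lmax) *
        (nsq (Matrix.diagonal fun i => (α i)⁻¹) (xk - xstar) +
          nsq (c⁻¹ • B - Matrix.diagonal α + Matrix.diagonal α) (dk - dstar)) := by
  have hV := hW.posSemidef_one_sub
  have hVsymm : (1 - W).IsSymm := isHermitian_iff_isSymm.1 hV.1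
  have hDE : (diagonal fun i => √(α i)) * (diagonal fun i => (√(α i))⁻¹) = 1 := by
    simp [(Real.sqrt_pos.2 (hα _)).ne']
  have hDD : (diagonal fun i => √(α i)) * (diagonal fun i => √(α i)) = diagonal α := by
    simp [Real.mul_self_sqrt (hα _).le]
  have hΛ : (diagonal α).PosSemidef := posSemidef_diagonal_iff.2 fun i => (hα i).le
  have hΛinv : (diagonal fun i => (α i)⁻¹).PosSemidef :=
    posSemidef_diagonal_iff.2 fun i => inv_nonneg.2 (hα i).le
  have hstep := nids_energy_le hVsymm hB.1 (fun i => (hα i).ne') hc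
    (hDD ▸ hV.sub_smul_mul_mul_mul_self (isHermitian_diagonal _) (isHermitian_diagonal _) hDE
      hcW.posSemidef) hdu hxu hxs hds hdstar hdk
  have hx := nids_gradient_step_le (fun i => (hα i).le) hL hs
    (fun i => strongConvexOn_iff_convex.2 (hsc i)) hg hlip hss xk xstar
  have hd := nids_dual_le (hB.posSemidef hV) hΛ
    (hDD ▸ (isHermitian_iff_isSymm.2 (hB.isSymm hVsymm)).posSemidef_smul_mul_self_sub
      (isHermitian_diagonal _) (isHermitian_diagonal _) hDE hl2) hc.ne' (dk - dstar)
  rw [sub_add_cancel, nsq_smul_weight, nsq_smul_weight]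
  refine (hstep.trans_eq (add_sub_assoc _ _ _)).trans (add_le_max_mul_add hx hd ?_ ?_)
  · exact nsq_nonneg hΛinv _
  · exact mul_nonneg (inv_nonneg.2 hc.le) (nsq_nonneg (hB.posSemidef hV) _)

/-- Theorem 3.9: linear convergence of NIDS in the smooth strongly convex case. -/
theorem nids_linear_convergence
    {n p : ℕ} (hn : 0 < n)
    (W : Matrix (Fin n) (Fin n) ℝ) (hW : IsMixing W)
    (α L μ : Fin n → ℝ) (hα : ∀ i, 0 < α i) (hL : ∀ i, 0 < L i) (hμ : ∀ i, 0 < μ i)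
    (c : ℝ) (hc : 0 < c)
    (hcW : ((1 : Matrix (Fin n) (Fin n) ℝ) -
      c • ((Matrix.diagonal fun i => Real.sqrt (α i)) * (1 - W) *
        Matrix.diagonal fun i => Real.sqrt (α i))).PosDef)
    (B : Matrix (Fin n) (Fin n) ℝ) (hB : IsMoorePenrose (1 - W) B)
    (s : Fin n → EuclideanSpace ℝ (Fin p) → ℝ)
    (g : Fin n → EuclideanSpace ℝ (Fin p) → EuclideanSpace ℝ (Fin p))
    (hs : ∀ i, ConvexOn ℝ Set.univ (s i))
    (hg : ∀ i v, HasGradientAt (s i) (g i v) v)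
    (hlip : ∀ i (v w : EuclideanSpace ℝ (Fin p)), ‖g i v - g i w‖ ≤ L i * ‖v - w‖)
    (hsc : ∀ i, ConvexOn ℝ Set.univ
      fun v : EuclideanSpace ℝ (Fin p) => s i v - μ i / 2 * ‖v‖ ^ 2)
    (hss : (⨆ i, α i * L i) ≤ 2)
    (dk dk1 xk xk1 dstar xstar : Matrix (Fin n) (Fin p) ℝ)
    (hdu : dk1 = dk + c • ((1 - W) *
      (xk - Matrix.diagonal α * gradS g xk - Matrix.diagonal α * dk)))
    (hxu : xk1 = xk - Matrix.diagonal α * gradS g xk - Matrix.diagonal α * dk1)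
    (hxs : (1 - W) * xstar = 0)
    (hds : gradS g xstar + dstar = 0)
    (hdstar : InRange (1 - W) dstar) (hdk : InRange (1 - W) dk)
    (lmax : ℝ)
    (hl1 : IsEig ((Matrix.diagonal fun i => (Real.sqrt (α i))⁻¹) * B *
      Matrix.diagonal fun i => (Real.sqrt (α i))⁻¹) lmax)
    (hl2 : ∀ t, IsEig ((Matrix.diagonal fun i => (Real.sqrt (α i))⁻¹) * B *
      Matrix.diagonal fun i => (Real.sqrt (α i))⁻¹) t → t ≤ lmax) :
    nsq (Matrix.diagonal fun i => (α i)⁻¹) (xk1 - xstar) +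
        nsq (c⁻¹ • B - Matrix.diagonal α + Matrix.diagonal α) (dk1 - dstar) ≤
      max (1 - (2 - ⨆ i, α i * L i) * ⨅ i, μ i * α i) (1 - c / lmax) *
        (nsq (Matrix.diagonal fun i => (α i)⁻¹) (xk - xstar) +
          nsq (c⁻¹ • B - Matrix.diagonal α + Matrix.diagonal α) (dk - dstar)) :=
  nids_linear_convergence_general W hW α L μ hα hL c hc hcW B hB s g hs hg hlip hsc hss dk dk1 xk
    xk1 dstar xstar hdu hxu hxs hds hdstar hdk lmax hl2
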